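/- There is a constant c > 0 such that for all integers m ≥ 2 and n ≥ max(m,3), the partial function dot_m : S² ⇀ S — defined exactly on pairs (i,j) with j ∈ {0,1}, with dot_m(i,0) = 0 and dot_m(i,1) = i — can be simulated through n-colorings by a finite simple graph with at most c·n³ vertices and at most c·n⁴ edges. -/

import Mathlib

/-- A proper `n`-coloring of a simple graph: adjacent vertices get different colors. -/
def IsProperColoring {V : Type} (G : SimpleGraph V) {n : ℕ} (σ : V → Fin n) : Prop :=
  ∀ ⦃u v : V⦄, G.Adj u v → σ u ≠ σ v

/-- The graph `G`, with input vertices `x`, output vertices `y` and reference vertices `r`,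
simulates the partial function `φ : S^p ⇀ S^q` (encoded via `Option`) through `n`-colorings,
where `S = {0,…,m-1}` is identified with the first `m` colors of `C = {0,…,n-1}`. -/
def Simulates {V : Type} (G : SimpleGraph V) (m n : ℕ) {p q : ℕ}
    (φ : (Fin p → Fin m) → Option (Fin q → Fin m))
    (x : Fin p → V) (y : Fin q → V) (r : Fin n → V) : Prop :=
  Function.Injective r ∧
  (∃ σ : V → Fin n, IsProperColoring G σ) ∧
  (∀ σ : V → Fin n, IsProperColoring G σ → Function.Injective fun i => σ (r i)) ∧
  ∀ a : Fin p → Fin n,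
    ((∃ σ : V → Fin n, IsProperColoring G σ ∧ (∀ i, σ (r i) = i) ∧ ∀ j, σ (x j) = a j) ↔
      ∃ a' : Fin p → Fin m, (∀ j, (a j : ℕ) = (a' j : ℕ)) ∧ (φ a').isSome) ∧
    (∀ σ τ : V → Fin n, IsProperColoring G σ → IsProperColoring G τ →
      (∀ i, σ (r i) = i) → (∀ i, τ (r i) = i) →
      (∀ j, σ (x j) = a j) → (∀ j, τ (x j) = a j) → σ = τ) ∧
    (∀ σ : V → Fin n, IsProperColoring G σ → (∀ i, σ (r i) = i) → (∀ j, σ (x j) = a j) →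
      ∀ (a' : Fin p → Fin m) (b : Fin q → Fin m),
        (∀ j, (a j : ℕ) = (a' j : ℕ)) → φ a' = some b →
        ∀ k, (σ (y k) : ℕ) = (b k : ℕ))

/-!
Every vertex `v` carries a list `Allowed m v` of admissible colours, enforced by joining `v` to
the reference vertex `r i` for every `i` outside the list; the list `{i}` of `r i` makes the
references a clique. Once the references are coloured by the identity, `x0 < m`, `x1 ∈ {0, 1}`,
and the rest of the colouring is forced:
* for each nonzero colour `c`, `k c ∈ {0, c}` is adjacent to `x0` and the `k c` form a clique,
  so `k c = 0` exactly when `x0 = c`;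
* the triangle `t, p, q` with lists `{0,1}, {0,2}, {1,2}` and `t ~ x1` gives `p = 2 x1`, so
  `switch c` (which is `x1`, or `p` when `c = 1`) is `0` if `x1 = 0` and `switchColor c ∉ {0, c}`
  if `x1 = 1`;
* `h c ∈ {0, switchColor c, c}` and `a c ∈ {0, c}`, with `h c ~ k c, switch c` and
  `a c ~ h c, switch c`, force `a c = 0` when `x1 = 1 ∧ x0 = c` and `a c = c` otherwise;
* the output `y` is adjacent to all `a c`, which use every colour except `x0 · x1`.
The graph has `4n + 3` vertices and `O(n²)` edges.
-/

theorem Simulates.of_canonical {V : Type} {G : SimpleGraph V} {m n p q : ℕ}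
    {φ : (Fin p → Fin m) → Option (Fin q → Fin m)}
    {x : Fin p → V} {y : Fin q → V} {r : Fin n → V}
    (hr : Pairwise fun i j => G.Adj (r i) (r j))
    (col : (Fin p → Fin m) → V → Fin n)
    (hdom : ∃ a, (φ a).isSome)
    (col_proper : ∀ a, (φ a).isSome → IsProperColoring G (col a))
    (col_ref : ∀ a i, col a (r i) = i)
    (col_x : ∀ a j, (col a (x j) : ℕ) = a j)
    (col_y : ∀ a b, φ a = some b → ∀ k, (col a (y k) : ℕ) = b k)
    (forced : ∀ σ, IsProperColoring G σ → (∀ i, σ (r i) = i) →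
      ∃ a, (φ a).isSome ∧ σ = col a) :
    Simulates G m n φ x y r := by
  have input_eq {a a' : Fin p → Fin m} {b : Fin p → Fin n}
      (ha : ∀ j, (b j : ℕ) = a j) (ha' : ∀ j, (b j : ℕ) = a' j) : a = a' :=
    funext fun j => Fin.ext ((ha j).symm.trans (ha' j))
  have forced_input {σ : V → Fin n} {b : Fin p → Fin n} (hσ : IsProperColoring G σ)
      (hσr : ∀ i, σ (r i) = i) (hσx : ∀ j, σ (x j) = b j) :
      ∃ a, (φ a).isSome ∧ σ = col a ∧ ∀ j, (b j : ℕ) = a j := by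
    obtain ⟨a, ha, rfl⟩ := forced σ hσ hσr
    exact ⟨a, ha, rfl, fun j => hσx j ▸ col_x a j⟩
  refine ⟨fun i j hij => ?_, ?_, fun σ hσ i j hij => ?_, fun b => ⟨⟨?_, ?_⟩, ?_, ?_⟩⟩
  · by_contra hne
    have hadj : G.Adj (r i) (r j) := hr hne
    exact G.irrefl (hij ▸ hadj)
  · obtain ⟨a, ha⟩ := hdom
    exact ⟨col a, col_proper a ha⟩
  · by_contra hne
    exact hσ (hr hne) hij
  · rintro ⟨σ, hσ, hσr, hσx⟩
    obtain ⟨a, ha, -, hab⟩ := forced_input hσ hσr hσx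
    exact ⟨a, hab, ha⟩
  · rintro ⟨a, hab, ha⟩
    exact ⟨col a, col_proper a ha, col_ref a, fun j => Fin.ext ((col_x a j).trans (hab j).symm)⟩
  · intro σ τ hσ hτ hσr hτr hσx hτx
    obtain ⟨a, -, rfl, hab⟩ := forced_input hσ hσr hσx
    obtain ⟨a', -, rfl, hab'⟩ := forced_input hτ hτr hτx
    rw [input_eq hab hab']
  · intro σ hσ hσr hσx a b hab hφ k
    obtain ⟨a', -, rfl, hab'⟩ := forced_input hσ hσr hσx
    rw [input_eq hab' hab]
    exact col_y a b hφ k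

theorem SimpleGraph.natCard_edgeSet_le_sq {V : Type*} [Finite V] (G : SimpleGraph V) :
    Nat.card G.edgeSet ≤ Nat.card V ^ 2 := by
  classical
  have := Fintype.ofFinite V
  rw [Nat.card_eq_fintype_card, ← G.edgeFinset_card, Nat.card_eq_fintype_card]
  exact G.card_edgeFinset_le_card_choose_two.trans (Nat.choose_le_pow _ _)

namespace DotGadget

abbrev NonzeroColor (n : ℕ) := {c : Fin n // (c : ℕ) ≠ 0}

inductive Vertex (n : ℕ) : Type
  | ref (i : Fin n)
  | x0 | x1 | t | p | q | y
  | k (c : NonzeroColor n)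
  | h (c : NonzeroColor n)
  | a (c : NonzeroColor n)
  deriving Fintype

variable {m n : ℕ}

theorem natCard_vertex_le : Nat.card (Vertex n) ≤ 4 * n + 6 := by
  rw [Nat.card_congr (Vertex.proxyTypeEquiv n).symm]
  simp only [Nat.card_eq_fintype_card, Fintype.card_sum, Fintype.card_fin, Fintype.card_unit]
  have : Fintype.card (NonzeroColor n) ≤ n :=
    (Fintype.card_subtype_le _).trans_eq (Fintype.card_fin n)
  omega

def switchColor (c : ℕ) : ℕ := if c = 1 then 2 else 1

def switch (c : NonzeroColor n) : Vertex n := if (c : ℕ) = 1 then .p else .x1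

def Allowed (m : ℕ) : Vertex n → ℕ → Prop
  | .ref i, j => j = i
  | .x0, j => j < m
  | .x1, j | .t, j => j < 2
  | .p, j => j = 0 ∨ j = 2
  | .q, j => j = 1 ∨ j = 2
  | .y, _ => True
  | .k c, j | .a c, j => j = 0 ∨ j = c
  | .h c, j => j = 0 ∨ j = switchColor c ∨ j = c

inductive Edge (m : ℕ) : Vertex n → Vertex n → Prop
  | ref {i : Fin n} {v : Vertex n} : ¬ Allowed m v i → Edge m (.ref i) v
  | t_x1 : Edge m .t .x1
  | p_t : Edge m .p .t
  | q_t : Edge m .q .t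
  | q_p : Edge m .q .p
  | k_k {c c' : NonzeroColor n} : c ≠ c' → Edge m (.k c) (.k c')
  | k_x0 (c : NonzeroColor n) : Edge m (.k c) .x0
  | h_k (c : NonzeroColor n) : Edge m (.h c) (.k c)
  | h_switch (c : NonzeroColor n) : Edge m (.h c) (switch c)
  | a_h (c : NonzeroColor n) : Edge m (.a c) (.h c)
  | a_switch (c : NonzeroColor n) : Edge m (.a c) (switch c)
  | y_a (c : NonzeroColor n) : Edge m .y (.a c)

theorem Edge.ne {u v : Vertex n} (e : Edge m u v) : u ≠ v := by
  cases e with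
  | ref h => rintro rfl; exact h rfl
  | k_k h => simpa using h
  | h_switch | a_switch => unfold switch; split_ifs <;> simp
  | _ => simp

def graph (m n : ℕ) : SimpleGraph (Vertex n) := SimpleGraph.fromRel (Edge m)

theorem graph_adj_of_edge {u v : Vertex n} (e : Edge m u v) : (graph m n).Adj u v :=
  (SimpleGraph.fromRel_adj _ u v).mpr ⟨e.ne, .inl e⟩

def canonColor (a0 a1 : ℕ) : Vertex n → ℕ
  | .ref i => i
  | .x0 => a0
  | .x1 => a1
  | .t => if a1 = 1 then 0 else 1
  | .p => if a1 = 1 then 2 else 0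
  | .q => if a1 = 1 then 1 else 2
  | .y => if a1 = 1 then a0 else 0
  | .k c => if a0 = c then 0 else c
  | .h c => if a1 = 1 then (if a0 = c then c else 0) else switchColor c
  | .a c => if a1 = 1 ∧ a0 = c then 0 else c

theorem canonColor_lt (h3 : 3 ≤ n) {a0 a1 : ℕ} (ha0 : a0 < n) (ha1 : a1 < n) (v : Vertex n) :
    canonColor a0 a1 v < n := by
  cases v with
  | ref i => exact i.isLt
  | k c | h c | a c =>
    have := c.1.isLt
    simp only [canonColor, switchColor]; split_ifs <;> omega
  | _ => simp only [canonColor]; (try split_ifs) <;> omega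

theorem canonColor_allowed {a0 a1 : ℕ} (ha0 : a0 < m) (ha1 : a1 < 2) (v : Vertex n) :
    Allowed m v (canonColor a0 a1 v) := by
  cases v <;> simp only [Allowed, canonColor] <;> (try split_ifs) <;> simp_all

theorem canonColor_ne_of_edge {a0 a1 : ℕ} (ha0 : a0 < m) (ha1 : a1 < 2) {u v : Vertex n}
    (e : Edge m u v) : canonColor a0 a1 u ≠ canonColor a0 a1 v := by
  cases e with
  | @ref i v h =>
    intro hi
    exact h ((show (i : ℕ) = canonColor a0 a1 v from hi) ▸ canonColor_allowed ha0 ha1 v)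
  | @k_k c c' hcc' =>
    have : (c : ℕ) ≠ c' := fun h => hcc' (Subtype.ext (Fin.ext h))
    have := c.2; have := c'.2
    simp only [canonColor]; split_ifs <;> omega
  | h_switch c | a_switch c =>
    have := c.2
    unfold switch; split_ifs <;> simp only [canonColor, switchColor] <;> split_ifs <;> omega
  | k_x0 c | h_k c | a_h c | y_a c =>
    have := c.2
    simp only [canonColor, switchColor]; split_ifs <;> omega
  | _ => simp only [canonColor]; split_ifs <;> omega

def canonColoring (h3 : 3 ≤ n) (hmn : m ≤ n) (a : Fin 2 → Fin m) (v : Vertex n) : Fin n :=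
  ⟨canonColor (a 0) (a 1) v, canonColor_lt h3 (by omega) (by omega) v⟩

theorem isProperColoring_canonColoring (h3 : 3 ≤ n) (hmn : m ≤ n) {a : Fin 2 → Fin m}
    (ha : (a 1 : ℕ) < 2) : IsProperColoring (graph m n) (canonColoring h3 hmn a) := by
  intro u v huv hcol
  obtain ⟨-, e | e⟩ := (SimpleGraph.fromRel_adj _ u v).mp huv
  · exact canonColor_ne_of_edge (a 0).isLt ha e (congrArg Fin.val hcol)
  · exact canonColor_ne_of_edge (a 0).isLt ha e (congrArg Fin.val hcol).symm

section Forcing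

variable {σ : Vertex n → Fin n} (hσ : IsProperColoring (graph m n) σ)
  (hr : ∀ i, σ (.ref i) = i)
include hσ

theorem val_ne_of_edge {u v : Vertex n} (e : Edge m u v) : (σ u : ℕ) ≠ σ v :=
  fun h => hσ (graph_adj_of_edge e) (Fin.ext h)

include hr

theorem allowed_of_isProperColoring (v : Vertex n) : Allowed m v (σ v) := by
  by_contra h
  exact val_ne_of_edge hσ (Edge.ref h) (by rw [hr])

theorem forced_t_p_q :
    (σ .t : ℕ) = (if (σ .x1 : ℕ) = 1 then 0 else 1) ∧
    (σ .p : ℕ) = (if (σ .x1 : ℕ) = 1 then 2 else 0) ∧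
    (σ .q : ℕ) = (if (σ .x1 : ℕ) = 1 then 1 else 2) := by
  have := allowed_of_isProperColoring hσ hr .x1
  have := allowed_of_isProperColoring hσ hr .t
  have := allowed_of_isProperColoring hσ hr .p
  have := allowed_of_isProperColoring hσ hr .q
  have := val_ne_of_edge hσ .t_x1
  have := val_ne_of_edge hσ .p_t
  have := val_ne_of_edge hσ .q_t
  have := val_ne_of_edge hσ .q_p
  simp only [Allowed] at *
  split_ifs <;> omega

theorem forced_switch (c : NonzeroColor n) :
    (σ (switch c) : ℕ) = if (σ .x1 : ℕ) = 1 then switchColor c else 0 := by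
  have := allowed_of_isProperColoring hσ hr .x1
  obtain ⟨-, hp, -⟩ := forced_t_p_q hσ hr
  simp only [Allowed] at *
  unfold switch switchColor
  split_ifs at * <;> omega

theorem forced_k (c : NonzeroColor n) :
    (σ (.k c) : ℕ) = if (σ .x0 : ℕ) = c then 0 else (c : ℕ) := by
  have hk (c : NonzeroColor n) : (σ (.k c) : ℕ) = 0 ∨ (σ (.k c) : ℕ) = c :=
    allowed_of_isProperColoring hσ hr (.k c)
  have hx (c : NonzeroColor n) := val_ne_of_edge hσ (.k_x0 c)
  split_ifs with hc
  · have := hk c; have := hx c; omega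
  · refine (hk c).resolve_left fun hk0 => ?_
    have hx0 : (σ .x0 : ℕ) ≠ 0 := fun h => hx c (hk0.trans h.symm)
    let c' : NonzeroColor n := ⟨σ .x0, hx0⟩
    have hcc' : c ≠ c' := fun h => hc (by rw [h])
    have hk0' : (σ (.k c') : ℕ) = 0 := (hk c').resolve_right (hx c')
    exact val_ne_of_edge hσ (.k_k hcc') (hk0.trans hk0'.symm)

theorem forced_h_a (c : NonzeroColor n) :
    (σ (.h c) : ℕ) = (if (σ .x1 : ℕ) = 1 then if (σ .x0 : ℕ) = c then (c : ℕ) else 0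
      else switchColor c) ∧
    (σ (.a c) : ℕ) = if (σ .x1 : ℕ) = 1 ∧ (σ .x0 : ℕ) = c then 0 else (c : ℕ) := by
  have := c.2
  have := allowed_of_isProperColoring hσ hr (.h c)
  have := allowed_of_isProperColoring hσ hr (.a c)
  have := allowed_of_isProperColoring hσ hr .x1
  have := forced_k hσ hr c
  have := forced_switch hσ hr c
  have := val_ne_of_edge hσ (.h_k c)
  have := val_ne_of_edge hσ (.h_switch c)
  have := val_ne_of_edge hσ (.a_h c)
  have := val_ne_of_edge hσ (.a_switch c)
  simp only [Allowed, switchColor] at *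
  split_ifs at * <;> omega

theorem forced_y : (σ .y : ℕ) = if (σ .x1 : ℕ) = 1 then (σ .x0 : ℕ) else 0 := by
  have ha (c : NonzeroColor n) := (forced_h_a hσ hr c).2
  have hy (c : NonzeroColor n) := val_ne_of_edge hσ (.y_a c)
  by_cases hy0 : (σ .y : ℕ) = 0
  · rw [hy0]
    split_ifs with h1
    · by_contra hx0
      exact hy ⟨σ .x0, Ne.symm hx0⟩ (by rw [ha, if_pos ⟨h1, rfl⟩, hy0])
    · rfl
  · have hsel : (σ .x1 : ℕ) = 1 ∧ (σ .x0 : ℕ) = σ .y := by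
      by_contra h
      exact hy ⟨σ .y, hy0⟩ (by rw [ha, if_neg h])
    rw [if_pos hsel.1, hsel.2]

theorem eq_canonColor_of_isProperColoring (v : Vertex n) :
    (σ v : ℕ) = canonColor (σ .x0) (σ .x1) v := by
  obtain ⟨ht, hp, hq⟩ := forced_t_p_q hσ hr
  cases v with
  | ref i => simp [canonColor, hr]
  | x0 | x1 => rfl
  | t => exact ht
  | p => exact hp
  | q => exact hq
  | y => exact forced_y hσ hr
  | k c => exact forced_k hσ hr c
  | h c => exact (forced_h_a hσ hr c).1
  | a c => exact (forced_h_a hσ hr c).2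

end Forcing

def dot (hm : 2 ≤ m) (a : Fin 2 → Fin m) : Option (Fin 1 → Fin m) :=
  if (a 1 : ℕ) = 0 then some fun _ => ⟨0, zero_lt_two.trans_le hm⟩
  else if (a 1 : ℕ) = 1 then some fun _ => a 0
  else none

theorem dot_isSome_iff (hm : 2 ≤ m) (a : Fin 2 → Fin m) :
    (dot hm a).isSome ↔ (a 1 : ℕ) < 2 := by
  unfold dot
  split_ifs <;> simp <;> omega

theorem graph_simulates_dot (hm : 2 ≤ m) (h3 : 3 ≤ n) (hmn : m ≤ n) :
    Simulates (graph m n) m n (dot hm) ![.x0, .x1] (fun _ => .y) .ref := by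
  refine Simulates.of_canonical
    (fun i j hij => graph_adj_of_edge (.ref fun h => hij (Fin.ext h))) (canonColoring h3 hmn)
    ⟨fun _ => ⟨0, by omega⟩, by simp [dot]⟩
    (fun a ha => isProperColoring_canonColoring h3 hmn ((dot_isSome_iff hm a).mp ha))
    (fun _ _ => rfl) (fun _ => Fin.forall_fin_two.mpr ⟨rfl, rfl⟩) ?_ ?_
  · intro a b hab k
    simp only [canonColoring, canonColor]
    unfold dot at hab
    split_ifs at hab <;> cases hab <;> simp [*]
  · intro σ hσ hr
    have hx0 := allowed_of_isProperColoring hσ hr .x0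
    have hx1 := allowed_of_isProperColoring hσ hr .x1
    refine ⟨![⟨σ .x0, hx0⟩, ⟨σ .x1, by simp only [Allowed] at hx1; omega⟩],
      (dot_isSome_iff hm _).mpr hx1, funext fun v => Fin.ext ?_⟩
    exact eq_canonColor_of_isProperColoring hσ hr v

end DotGadget

open DotGadget

/-- There is a constant `c > 0` such that for all `m ≥ 2` and `n ≥ max(m,3)`, the partial
function `dot_m : S² ⇀ S` — defined exactly on pairs `(i,j)` with `j ∈ {0,1}`, where
`dot_m(i,0) = 0` and `dot_m(i,1) = i` — can be simulated through `n`-colorings by a finite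
simple graph with at most `c·n³` vertices and `c·n⁴` edges. -/
theorem statement10 :
    ∃ c : ℕ, 0 < c ∧
      ∀ m n : ℕ, (hm : 2 ≤ m) → max m 3 ≤ n →
        ∃ (V : Type) (_ : Fintype V) (G : SimpleGraph V)
          (x : Fin 2 → V) (y : Fin 1 → V) (r : Fin n → V),
          Simulates G m n
            (fun a : Fin 2 → Fin m =>
              if (a 1 : ℕ) = 0 then some fun _ : Fin 1 => (⟨0, by omega⟩ : Fin m)
              else if (a 1 : ℕ) = 1 then some fun _ : Fin 1 => a 0
              else none)
            x y r ∧
          Nat.card V ≤ c * n ^ 3 ∧ Nat.card G.edgeSet ≤ c * n ^ 4 := by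
  refine ⟨36, by norm_num, fun m n hm hn => ?_⟩
  have h3 : 3 ≤ n := le_of_max_le_right hn
  have hvert : Nat.card (Vertex n) ≤ 6 * n := natCard_vertex_le.trans (by omega)
  refine ⟨Vertex n, inferInstance, graph m n, _, _, _,
    graph_simulates_dot hm h3 (le_of_max_le_left hn), ?_, ?_⟩
  · calc Nat.card (Vertex n) ≤ 6 * n := hvert
      _ ≤ 36 * n ^ 3 := by nlinarith [Nat.le_self_pow (by norm_num : 3 ≠ 0) n]
  · calc Nat.card (graph m n).edgeSet ≤ Nat.card (Vertex n) ^ 2 :=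
          (graph m n).natCard_edgeSet_le_sq
      _ ≤ (6 * n) ^ 2 := Nat.pow_le_pow_left hvert 2
      _ ≤ 36 * n ^ 4 := by
        nlinarith [Nat.pow_le_pow_right (by omega : 0 < n) (by norm_num : 2 ≤ 4)]
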